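/- If φ is a smooth real 2L-periodic solution of H φ' - (1/2)φ² = 0, where H is the periodic Hilbert transform, then φ ≡ 0. In other words, the travelling-wave equation for the rBO equation with speed c = 1 (and zero integration constant) has only the trivial smooth real solution. -/
import Mathlib


/-!
Triviality of smooth periodic travelling waves of the rBO equation with
speed c = 1 (and zero integration constant): if φ is a smooth real
2L-periodic solution of H φ' − φ²/2 = 0 (H the periodic Hilbert transform),
then φ ≡ 0.  Taking Fourier coefficients, the equation is equivalent to
  2(π/L)|n| φ̂(n) = Σ_{k∈ℤ} φ̂(n−k) φ̂(k)  for all n ∈ ℤ,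
which is the form in which the hypothesis is stated below.
-/

open MeasureTheory

/-- Fourier coefficients of a 2L-periodic function. -/
noncomputable def fcoefL (L : ℝ) (φ : ℝ → ℝ) (n : ℤ) : ℂ :=
  (1 / (2 * L)) *
    ∫ x in (-L)..L, (φ x : ℂ) * Complex.exp (-Complex.I * Real.pi * n * x / L)

section aux
variable {L : ℝ} {φ : ℝ → ℝ}

theorem fcoefL_eq (hL : 0 < L) (hper : Function.Periodic (fun x => (φ x : ℂ)) (2 * L)) (n : ℤ) :
    haveI : Fact (0 < 2 * L) := ⟨by linarith⟩
    fourierCoeff (T := 2 * L) hper.lift n = fcoefL L φ n := by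
  haveI : Fact (0 < 2 * L) := ⟨by linarith⟩
  rw [fourierCoeff_eq_intervalIntegral (T := 2 * L) hper.lift n (-L)]
  have hba : -L + 2 * L = L := by ring
  rw [hba, fcoefL]
  rw [Complex.real_smul]
  congr 1
  · push_cast; ring
  refine intervalIntegral.integral_congr fun x hx => ?_
  rw [Function.Periodic.lift_coe, fourier_coe_apply, smul_eq_mul, mul_comm]
  congr 1
  congr 1
  push_cast
  field_simp

theorem fcoefL_neg (hL : 0 < L) (k : ℤ) :
    fcoefL L φ (-k) = starRingEnd ℂ (fcoefL L φ k) := by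
  have hconj : ∀ (g : ℝ → ℂ), (∫ x in (-L)..L, (starRingEnd ℂ) (g x)) = (starRingEnd ℂ) (∫ x in (-L)..L, g x) := by
    intro g
    rw [intervalIntegral, intervalIntegral, integral_conj, integral_conj, map_sub]
  rw [fcoefL, fcoefL, map_mul, ← hconj]
  congr 1
  · rw [map_div₀, map_one, map_mul, Complex.conj_ofReal, map_ofNat]
  refine intervalIntegral.integral_congr fun x hx => ?_
  rw [map_mul, Complex.conj_ofReal, ← Complex.exp_conj]
  congr 1
  push_cast
  simp [div_eq_mul_inv]
end aux

/-- **The travelling-wave equation with `c = 1` has only the trivial smooth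
real solution.** -/
theorem trivial_wave_speed_one (L : ℝ) (hL : 0 < L) (φ : ℝ → ℝ)
    (hsm : ContDiff ℝ (⊤ : ℕ∞) φ) (hper : ∀ x, φ (x + 2 * L) = φ x)
    (heq : ∀ n : ℤ,
      ((2 * (Real.pi / L) * |(n : ℝ)| : ℝ) : ℂ) * fcoefL L φ n
        = ∑' k : ℤ, fcoefL L φ (n - k) * fcoefL L φ k) :
    ∀ x, φ x = 0 := by
  haveI : Fact (0 < 2 * L) := ⟨by linarith⟩
  have hperC : Function.Periodic (fun x => (φ x : ℂ)) (2 * L) := fun x => by simp [hper x]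
  set f : AddCircle (2 * L) → ℂ := hperC.lift with hf
  have hcont : Continuous f := by
    rw [hf]
    exact continuous_coinduced_dom.mpr (by
      show Continuous ((hperC.lift) ∘ ((↑) : ℝ → AddCircle (2 * L)))
      have : (hperC.lift) ∘ ((↑) : ℝ → AddCircle (2 * L)) = fun x => (φ x : ℂ) := by
        funext x; exact hperC.lift_coe x
      rw [this]
      exact Complex.continuous_ofReal.comp hsm.continuous)
  set F : C(AddCircle (2 * L), ℂ) := ⟨f, hcont⟩ with hF
  have hcoeff : ∀ n, fourierCoeff (F : AddCircle (2 * L) → ℂ) n = fcoefL L φ n := by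
    intro n; exact fcoefL_eq hL hperC n
  -- summability of squared norms via Hilbert basis
  have hsum : Summable (fun k : ℤ => ‖fcoefL L φ k‖ ^ 2) := by
    have h1 : ∀ n, fourierBasis.repr (ContinuousMap.toLp (E := ℂ) 2 AddCircle.haarAddCircle ℂ F) n
        = fcoefL L φ n := by
      intro n
      rw [fourierBasis_repr, fourierCoeff_toLp, hcoeff]
    have h2 := lp.memℓp (fourierBasis.repr (ContinuousMap.toLp (E := ℂ) 2 AddCircle.haarAddCircle ℂ F))
    have h3 := h2.summable (by norm_num : (0:ℝ) < (2 : ENNReal).toReal)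
    simp only [h1] at h3
    convert h3 using 2 with k
    norm_num
  -- evaluate equation at n = 0
  have h0 := heq 0
  simp only [Int.cast_zero, abs_zero, mul_zero, zero_mul, Complex.ofReal_zero, zero_sub] at h0
  have hterm : ∀ k : ℤ, fcoefL L φ (-k) * fcoefL L φ k = ((‖fcoefL L φ k‖ ^ 2 : ℝ) : ℂ) := by
    intro k
    rw [fcoefL_neg hL, Complex.conj_mul']
    push_cast
    ring
  rw [tsum_congr hterm] at h0
  have h0' : ((∑' k : ℤ, ‖fcoefL L φ k‖ ^ 2 : ℝ) : ℂ) = 0 := by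
    rw [Complex.ofReal_tsum]; exact h0.symm
  have hzero : ∀ k : ℤ, fcoefL L φ k = 0 := by
    intro k
    have hs : ∑' k : ℤ, ‖fcoefL L φ k‖ ^ 2 = 0 := by exact_mod_cast h0'
    have hk : ‖fcoefL L φ k‖ ^ 2 ≤ 0 := hs ▸ Summable.le_tsum hsum k (fun j _ => sq_nonneg _)
    have : ‖fcoefL L φ k‖ = 0 := by nlinarith [norm_nonneg (fcoefL L φ k)]
    exact norm_eq_zero.mp this
  -- fourier coefficients of F all vanish, F continuous ⇒ F = 0
  have hF0 : Summable (fourierCoeff (F : AddCircle (2 * L) → ℂ)) := by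
    have : (fourierCoeff (F : AddCircle (2 * L) → ℂ)) = fun _ => 0 := by
      funext n; rw [hcoeff, hzero]
    rw [this]; exact summable_zero
  have hHS := hasSum_fourier_series_of_summable hF0
  have : (fun i : ℤ => fourierCoeff (F : AddCircle (2 * L) → ℂ) i • fourier (T := 2 * L) i)
      = fun _ => 0 := by
    funext i; rw [hcoeff, hzero, zero_smul]
  rw [this] at hHS
  have hFeq : F = 0 := hHS.unique hasSum_zero
  intro x
  have : f (↑x : AddCircle (2 * L)) = 0 := by
    rw [show f (↑x : AddCircle (2 * L)) = F (↑x) from rfl, hFeq]; rfl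
  have h2 : ((φ x : ℂ)) = 0 := by
    rw [← hperC.lift_coe x]; exact this
  exact_mod_cast h2
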